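/- arXiv:2105.00407 — 2 statements merged into one kernel-verified Lean document; each statement's English description precedes it below -/
import Mathlib

section
/- Every self-similar necklace in ℝ^d satisfying the open set condition is of bounded ramification: for each main node z_k of F, the sequence {c_m(z_k)}_{m≥1} is bounded. -/
open Set Topology Metric Bornology

noncomputable section

/-- Euclidean space `ℝ^d`. -/
abbrev Euc (d : ℕ) := EuclideanSpace ℝ (Fin d)

/-- A fractal necklace in `ℝ^d`: the attractor `F` of a necklace IFS `f_1, …, f_n`
(`n ≥ 3`) of contractive homeomorphisms of `ℝ^d`, where cyclically adjacent 1-level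
copies meet in a single point (a main node `z k`) and non-adjacent copies are disjoint. -/
structure Necklace (d : ℕ) where
  n : ℕ
  hn : 3 ≤ n
  f : Fin n → (Euc d ≃ₜ Euc d)
  contr : ∀ k, ∃ c : NNReal, c < 1 ∧ LipschitzWith c (f k)
  F : Set (Euc d)
  Fne : F.Nonempty
  Fcpt : IsCompact F
  Fattr : F = ⋃ k, (f k) '' F
  z : Fin n → Euc d
  hz : ∀ k : Fin n, (f k) '' F ∩ (f (k + ⟨1, by omega⟩)) '' F = {z k}
  hdisj : ∀ m k : Fin n, m ≠ k → m ≠ k + ⟨1, by omega⟩ → k ≠ m + ⟨1, by omega⟩ →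
    (f m) '' F ∩ (f k) '' F = ∅

namespace Necklace

variable {d : ℕ}

/-- The digit `1` of `Fin n`. -/
def one (N : Necklace d) : Fin N.n := ⟨1, by have := N.hn; omega⟩

/-- The homeomorphism `f_σ = f_{i₁} ∘ ⋯ ∘ f_{i_m}` associated to a word `σ = i₁⋯i_m`. -/
def word (N : Necklace d) : List (Fin N.n) → (Euc d ≃ₜ Euc d)
  | [] => Homeomorph.refl _
  | i :: s => (N.word s).trans (N.f i)

/-- The copy `F_σ = f_σ(F)` of the necklace. -/
def copy (N : Necklace d) (σ : List (Fin N.n)) : Set (Euc d) := N.word σ '' N.F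

/-- `c_m(x)`: the number of words `σ` of length `m` with `x ∈ F_σ`. -/
def cnt (N : Necklace d) (m : ℕ) (x : Euc d) : ℕ :=
  Set.ncard {σ : List (Fin N.n) | σ.length = m ∧ x ∈ N.copy σ}

/-- The boundary `∂_F F_k = {z_{k-1}, z_k}` of the 1-level copy `F_k` in `F`. -/
def bdry (N : Necklace d) (k : Fin N.n) : Set (Euc d) := {N.z (k - N.one), N.z k}

/-- A necklace is stable if for each `k` at least two second-level copies `F_{kj}`
meet `∂_F F_k`. -/
def Stable (N : Necklace d) : Prop :=
  ∀ k : Fin N.n,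
    2 ≤ Set.ncard {A : Set (Euc d) |
      (∃ j : Fin N.n, A = N.f k '' (N.f j '' N.F)) ∧ (A ∩ N.bdry k).Nonempty}

/-- A necklace is good if `∂_F F_k` is not contained in any second-level copy `F_{kj}`. -/
def Good (N : Necklace d) : Prop :=
  ∀ k j : Fin N.n, ¬ (N.bdry k ⊆ N.f k '' (N.f j '' N.F))

/-- A necklace is of bounded ramification if `{c_m(z_k)}_m` is bounded for each `k`. -/
def BoundedRamification (N : Necklace d) : Prop :=
  ∀ k : Fin N.n, ∃ C : ℕ, ∀ m : ℕ, N.cnt m (N.z k) ≤ C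

/-- `M_F`: the set of points that are main nodes of some copy of `F`. -/
def MF (N : Necklace d) : Set (Euc d) :=
  {x | ∃ (σ : List (Fin N.n)) (k : Fin N.n), x = N.word σ (N.z k)}

/-- A necklace has no cut points if `F \ {x}` is connected for every `x ∈ F`. -/
def NoCutPoints (N : Necklace d) : Prop :=
  ∀ x ∈ N.F, IsConnected (N.F \ {x})

/-- Property I: each 1-level copy `F_k` has an arc from `z_{k-1}` to `z_k` passing
through at least two main nodes of `F_k`. -/
def PropertyI (N : Necklace d) : Prop :=
  ∀ k : Fin N.n, ∃ γ : Path (N.z (k - N.one)) (N.z k),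
    Function.Injective γ ∧ (∀ t, γ t ∈ N.f k '' N.F) ∧
    ∃ p q : Euc d, p ≠ q ∧ (∃ j, p = N.f k (N.z j)) ∧ (∃ j, q = N.f k (N.z j)) ∧
      p ∈ Set.range γ ∧ q ∈ Set.range γ

/-- A necklace is self-similar if the maps of its NIFS are (contractive) similitudes. -/
def SelfSimilar (N : Necklace d) : Prop :=
  ∀ k : Fin N.n, ∃ c : ℝ, 0 < c ∧ c < 1 ∧ ∀ x y, dist (N.f k x) (N.f k y) = c * dist x y

/-- The open set condition for the NIFS of a necklace. -/
def OSC (N : Necklace d) : Prop :=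
  ∃ V : Set (Euc d), V.Nonempty ∧ IsOpen V ∧ IsBounded V ∧
    (∀ k, N.f k '' V ⊆ V) ∧ ∀ j k : Fin N.n, j ≠ k → N.f j '' V ∩ N.f k '' V = ∅

end Necklace

/-!
Write `R(x) = {a | x = f_τ(z_a) for some word τ}` (`nodeIndices x`). Since `c_{m+1}(x) ≤ ∑_j c_m(f_j⁻¹ x)`, induction
on `m` gives `c_m(x) ≤ n ^ #R(x) ≤ n ^ n`, provided no main node is periodic: a point outside the
main nodes lies in at most one first-level copy, and at `x = z_a` each `R(f_j⁻¹ z_a)` misses `a`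
unless `f_{jτ}(z_a) = z_a` for some `τ`.

Under the OSC no main node is periodic. If `f_τ(z_a) = z_a` and `z_a ∈ F_b` with `b ≠ τ₀`, then
`z_a ∈ F_{τ^m b}` for every `m`, and the open sets `f_{τ^m b}(V)` are pairwise disjoint. Refining
the words `τ^m b`, `m ≤ K`, to copies through `z_a` of a common size `ρ` yields `K + 1` disjoint
balls of radius `≍ ρ` inside a ball of radius `≍ ρ` around `z_a`, which a volume count forbids for
large `K`.
-/

theorem exists_prod_map_append_mem_Ioc {α : Type*} {P : List α → Prop}
    (hP : ∀ σ, P σ → ∃ i, P (σ ++ [i])) {c : α → ℝ} {κ q : ℝ} (hκ : 0 < κ)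
    (hc : ∀ i, κ ≤ c i ∧ c i ≤ q) (hq : q < 1) {σ₀ : List α} (h₀ : P σ₀) {ρ : ℝ} (hρ : 0 < ρ)
    (hρσ₀ : ρ ≤ (σ₀.map c).prod) :
    ∃ σ₁, P (σ₀ ++ σ₁) ∧ κ * ρ < ((σ₀ ++ σ₁).map c).prod ∧ ((σ₀ ++ σ₁).map c).prod ≤ ρ := by
  -- `t` more letters always suffice to bring the product down to `ρ`
  have hdescend : ∀ (t : ℕ) σ, P σ → κ * ρ < (σ.map c).prod → (σ.map c).prod * q ^ t ≤ ρ →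
      ∃ σ₁, P (σ ++ σ₁) ∧ κ * ρ < ((σ ++ σ₁).map c).prod ∧ ((σ ++ σ₁).map c).prod ≤ ρ := by
    intro t
    induction t with
    | zero =>
      exact fun σ hσ hlo hhi => ⟨[], by simpa using hσ, by simpa using hlo, by simpa using hhi⟩
    | succ t ih =>
      intro σ hσ hlo hhi
      by_cases hstop : (σ.map c).prod ≤ ρ
      · exact ⟨[], by simpa using hσ, by simpa using hlo, by simpa using hstop⟩
      obtain ⟨i, hi⟩ := hP σ hσ
      have hq₀ : 0 ≤ q := hκ.le.trans ((hc i).1.trans (hc i).2)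
      have hprod : ((σ ++ [i]).map c).prod = (σ.map c).prod * c i := by simp
      have hlo' : κ * ρ < ((σ ++ [i]).map c).prod := by
        rw [hprod]
        nlinarith [(hc i).1]
      have hhi' : ((σ ++ [i]).map c).prod * q ^ t ≤ ρ :=
        calc ((σ ++ [i]).map c).prod * q ^ t ≤ (σ.map c).prod * q * q ^ t := by
              rw [hprod]
              gcongr
              · linarith
              · exact (hc i).2
          _ = (σ.map c).prod * q ^ (t + 1) := by ring
          _ ≤ ρ := hhi
      obtain ⟨σ₁, h⟩ := ih (σ ++ [i]) hi hlo' hhi'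
      exact ⟨i :: σ₁, by simpa using h⟩
  have hκ₁ : κ < 1 := by
    obtain ⟨i, -⟩ := hP σ₀ h₀
    linarith [hc i]
  obtain ⟨t, ht⟩ := exists_pow_lt_of_lt_one (div_pos hρ (hρ.trans_le hρσ₀)) hq
  rw [lt_div_iff₀ (hρ.trans_le hρσ₀)] at ht
  exact hdescend t σ₀ h₀ (by nlinarith) (by linarith)

theorem ball_subset_image_ball_of_dist_eq {X Y : Type*} [PseudoMetricSpace X]
    [PseudoMetricSpace Y] {g : X → Y} (hg : Function.Surjective g) {r : ℝ} (hr : 0 < r)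
    (hd : ∀ x y, dist (g x) (g y) = r * dist x y) (v : X) (δ : ℝ) :
    ball (g v) (r * δ) ⊆ g '' ball v δ := by
  intro y hy
  obtain ⟨w, rfl⟩ := hg y
  rw [mem_ball, hd] at hy
  exact ⟨w, mem_ball.2 (lt_of_mul_lt_mul_left hy hr.le), rfl⟩

open MeasureTheory in
theorem card_le_of_pairwiseDisjoint_ball {E : Type*} [NormedAddCommGroup E] [NormedSpace ℝ E]
    [FiniteDimensional ℝ E] {ι : Type*} {s : Finset ι} {c : ι → E} {x : E} {ε R : ℝ}
    (hε : 0 < ε) (hR : 0 ≤ R) (hdisj : (s : Set ι).PairwiseDisjoint fun i => ball (c i) ε)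
    (hc : ∀ i ∈ s, dist (c i) x ≤ R) :
    (s.card : ℝ) ≤ ((R + ε) / ε) ^ Module.finrank ℝ E := by
  borelize E
  set μ : Measure E := Measure.addHaar
  have hsub : (⋃ i ∈ s, ball (c i) ε) ⊆ ball x (R + ε) := iUnion₂_subset fun i hi y hy => by
    rw [mem_ball] at hy ⊢
    linarith [dist_triangle y (c i) x, hc i hi]
  have hvol : s.card * μ (ball 0 ε) ≤ μ (ball 0 (R + ε)) := by
    calc s.card * μ (ball 0 ε) = ∑ i ∈ s, μ (ball (c i) ε) := by
          simp [Measure.addHaar_ball_center]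
      _ = μ (⋃ i ∈ s, ball (c i) ε) :=
          (measure_biUnion_finset hdisj fun _ _ => measurableSet_ball).symm
      _ ≤ μ (ball x (R + ε)) := measure_mono hsub
      _ = μ (ball 0 (R + ε)) := Measure.addHaar_ball_center μ _ _
  rw [Measure.addHaar_ball_of_pos μ _ hε,
    Measure.addHaar_ball_of_pos μ _ (r := R + ε) (by linarith),
    ← mul_assoc, ENNReal.mul_le_mul_iff_left (measure_ball_pos μ _ one_pos).ne'
      measure_ball_lt_top.ne, ← ENNReal.ofReal_natCast, ← ENNReal.ofReal_mul (by positivity),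
    ENNReal.ofReal_le_ofReal_iff (by positivity)] at hvol
  rwa [div_pow, le_div_iff₀ (by positivity)]

namespace Necklace

variable {d : ℕ} (N : Necklace d)

lemma word_cons (i : Fin N.n) (s : List (Fin N.n)) (x : Euc d) :
    N.word (i :: s) x = N.f i (N.word s x) := rfl

lemma word_append (σ τ : List (Fin N.n)) (x : Euc d) :
    N.word (σ ++ τ) x = N.word σ (N.word τ x) := by
  induction σ with
  | nil => rfl
  | cons i s ih => rw [List.cons_append, word_cons, ih, word_cons]

lemma image_word_append (σ τ : List (Fin N.n)) (A : Set (Euc d)) :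
    N.word (σ ++ τ) '' A = N.word σ '' (N.word τ '' A) := by
  rw [image_image]
  exact image_congr fun x _ => N.word_append σ τ x

lemma image_word_cons (i : Fin N.n) (s : List (Fin N.n)) (A : Set (Euc d)) :
    N.word (i :: s) '' A = N.f i '' (N.word s '' A) :=
  N.image_word_append [i] s A

lemma copy_append (σ τ : List (Fin N.n)) : N.copy (σ ++ τ) = N.word σ '' N.copy τ :=
  N.image_word_append σ τ N.F

lemma mem_copy_cons {i : Fin N.n} {s : List (Fin N.n)} {x : Euc d} :
    x ∈ N.copy (i :: s) ↔ (N.f i).symm x ∈ N.copy s := by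
  rw [copy, image_word_cons, Homeomorph.image_eq_preimage_symm, mem_preimage]; rfl

lemma image_f_subset (i : Fin N.n) : N.f i '' N.F ⊆ N.F := by
  conv_rhs => rw [N.Fattr]
  exact subset_iUnion_of_subset i le_rfl

lemma copy_subset (σ : List (Fin N.n)) : N.copy σ ⊆ N.F := by
  induction σ with
  | nil => simp [copy, word]
  | cons i s ih =>
    rw [copy, image_word_cons]
    exact (image_mono ih).trans (N.image_f_subset i)

lemma copy_singleton (i : Fin N.n) : N.copy [i] = N.f i '' N.F := by
  rw [copy, image_word_cons]
  simp [word]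

lemma exists_mem_copy_append_singleton {x : Euc d} {σ : List (Fin N.n)} (hx : x ∈ N.copy σ) :
    ∃ i, x ∈ N.copy (σ ++ [i]) := by
  obtain ⟨y, hy, rfl⟩ := hx
  rw [N.Fattr] at hy
  obtain ⟨i, hi⟩ := mem_iUnion.1 hy
  exact ⟨i, by rw [copy_append, copy_singleton]; exact mem_image_of_mem _ hi⟩

lemma z_mem_image_f (a : Fin N.n) : N.z a ∈ N.f a '' N.F :=
  (Set.eq_singleton_iff_unique_mem.1 (N.hz a)).1.1

lemma z_mem_image_f_add_one (a : Fin N.n) : N.z a ∈ N.f (a + N.one) '' N.F :=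
  (Set.eq_singleton_iff_unique_mem.1 (N.hz a)).1.2

lemma add_one_ne_self (a : Fin N.n) : a + N.one ≠ a := by
  have := N.hn
  intro h
  have hval := congrArg Fin.val h
  rw [Fin.val_add, one] at hval
  rcases Nat.lt_or_ge (a.val + 1) N.n with hlt | hge
  · rw [Nat.mod_eq_of_lt hlt] at hval
    omega
  · rw [show a.val + 1 = N.n by omega, Nat.mod_self] at hval
    omega

lemma exists_ne_z_mem_image_f (a t : Fin N.n) : ∃ b, b ≠ t ∧ N.z a ∈ N.f b '' N.F := by
  by_cases ha : a = t
  · exact ⟨a + N.one, ha ▸ N.add_one_ne_self a, N.z_mem_image_f_add_one a⟩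
  · exact ⟨a, ha, N.z_mem_image_f a⟩

lemma exists_eq_z_of_mem_image_f {x : Euc d} {j j' : Fin N.n} (hjj' : j ≠ j')
    (hj : x ∈ N.f j '' N.F) (hj' : x ∈ N.f j' '' N.F) : ∃ a, x = N.z a := by
  by_cases h : j' = j + N.one
  · subst h
    exact ⟨j, (N.hz j).subset ⟨hj, hj'⟩⟩
  by_cases h' : j = j' + N.one
  · subst h'
    exact ⟨j', (N.hz j').subset ⟨hj', hj⟩⟩
  have := N.hdisj j j' hjj' h' h
  exact absurd (this.subset ⟨hj, hj'⟩) (notMem_empty x)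

lemma cnt_eq_zero_of_notMem {x : Euc d} (hx : x ∉ N.F) (m : ℕ) : N.cnt m x = 0 := by
  rw [cnt, ncard_eq_zero (((List.finite_length_eq (Fin N.n) m).subset fun _ h => h.1))]
  exact eq_empty_of_forall_notMem fun σ hσ => hx (N.copy_subset σ hσ.2)

lemma cnt_zero_le_one (x : Euc d) : N.cnt 0 x ≤ 1 := by
  refine (ncard_le_ncard (t := {[]}) ?_ (finite_singleton _)).trans (ncard_singleton _).le
  rintro σ ⟨hσ, -⟩
  exact List.length_eq_zero_iff.1 hσ

lemma cnt_succ_le_sum (m : ℕ) (x : Euc d) :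
    N.cnt (m + 1) x ≤ ∑ j : Fin N.n, N.cnt m ((N.f j).symm x) := by
  have hsplit : {σ : List (Fin N.n) | σ.length = m + 1 ∧ x ∈ N.copy σ} =
      ⋃ j, List.cons j '' {σ | σ.length = m ∧ (N.f j).symm x ∈ N.copy σ} := by
    ext σ
    cases σ with
    | nil => simp
    | cons i s => simp [mem_copy_cons]
  rw [cnt, hsplit]
  refine (ncard_iUnion_le_of_fintype _).trans_eq (Finset.sum_congr rfl fun j _ => ?_)
  exact ncard_image_of_injective _ List.cons_injective

def nodeIndices (x : Euc d) : Set (Fin N.n) := {a | ∃ τ, x = N.word τ (N.z a)}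

lemma nodeIndices_symm_subset (i : Fin N.n) (x : Euc d) :
    N.nodeIndices ((N.f i).symm x) ⊆ N.nodeIndices x := fun a ⟨τ, hτ⟩ =>
  ⟨i :: τ, by rw [word_cons, ← hτ, Homeomorph.apply_symm_apply]⟩

lemma nodeIndices_symm_z_subset (hper : ∀ a τ, τ ≠ [] → N.word τ (N.z a) ≠ N.z a)
    (i a : Fin N.n) :
    N.nodeIndices ((N.f i).symm (N.z a)) ⊆ N.nodeIndices (N.z a) \ {a} := by
  refine fun b hb => ⟨N.nodeIndices_symm_subset i _ hb, ?_⟩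
  rintro rfl
  obtain ⟨τ, hτ⟩ := hb
  exact hper b (i :: τ) (List.cons_ne_nil _ _)
    (by rw [word_cons, ← hτ, Homeomorph.apply_symm_apply])

theorem cnt_le_pow_ncard_nodeIndices (hper : ∀ a τ, τ ≠ [] → N.word τ (N.z a) ≠ N.z a)
    (m : ℕ) (x : Euc d) : N.cnt m x ≤ N.n ^ (N.nodeIndices x).ncard := by
  have hn : 0 < N.n := by have := N.hn; omega
  induction m generalizing x with
  | zero => exact (N.cnt_zero_le_one x).trans (Nat.one_le_pow _ _ hn)
  | succ m ih =>
    refine (N.cnt_succ_le_sum m x).trans ?_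
    by_cases hnode : ∃ a, x = N.z a
    · obtain ⟨a, rfl⟩ := hnode
      have hmem : a ∈ N.nodeIndices (N.z a) := ⟨[], rfl⟩
      have hpos : 0 < (N.nodeIndices (N.z a)).ncard := (ncard_pos (toFinite _)).2 ⟨a, hmem⟩
      have hterm : ∀ i : Fin N.n,
          N.cnt m ((N.f i).symm (N.z a)) ≤ N.n ^ ((N.nodeIndices (N.z a)).ncard - 1) := by
        intro i
        refine (ih _).trans (Nat.pow_le_pow_right hn ?_)
        rw [← ncard_sdiff_singleton_of_mem hmem]
        exact ncard_le_ncard (N.nodeIndices_symm_z_subset hper i a) (toFinite _)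
      calc ∑ i, N.cnt m ((N.f i).symm (N.z a))
          ≤ ∑ _i : Fin N.n, N.n ^ ((N.nodeIndices (N.z a)).ncard - 1) :=
            Finset.sum_le_sum fun i _ => hterm i
        _ = N.n ^ (N.nodeIndices (N.z a)).ncard := by
            rw [Finset.sum_const, Finset.card_univ, Fintype.card_fin, smul_eq_mul, ← pow_succ',
              Nat.sub_add_cancel hpos]
    -- away from the main nodes, `x` lies in at most one first-level copy
    by_cases hj₀ : ∃ j₀, (N.f j₀).symm x ∈ N.F
    · obtain ⟨j₀, hj₀⟩ := hj₀
      have hzero : ∀ j, j ≠ j₀ → N.cnt m ((N.f j).symm x) = 0 := fun j hj =>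
        N.cnt_eq_zero_of_notMem (fun hjF => hnode (N.exists_eq_z_of_mem_image_f hj
          ⟨_, hjF, by simp⟩ ⟨_, hj₀, by simp⟩)) m
      rw [Finset.sum_eq_single j₀ (fun j _ hj => hzero j hj) (by simp)]
      exact (ih _).trans (Nat.pow_le_pow_right hn
        (ncard_le_ncard (N.nodeIndices_symm_subset j₀ x) (toFinite _)))
    · simp [N.cnt_eq_zero_of_notMem (not_exists.1 hj₀ _)]

lemma word_flatten_replicate_apply {τ : List (Fin N.n)} {x : Euc d} (hx : N.word τ x = x)
    (m : ℕ) : N.word (List.replicate m τ).flatten x = x := by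
  induction m with
  | zero => rfl
  | succ m ih => rw [List.replicate_succ, List.flatten_cons, word_append, ih, hx]

lemma mem_copy_flatten_replicate_append {τ : List (Fin N.n)} {x : Euc d} (hx : N.word τ x = x)
    {b : Fin N.n} (hb : x ∈ N.f b '' N.F) (m : ℕ) :
    x ∈ N.copy ((List.replicate m τ).flatten ++ [b]) := by
  rw [copy_append, copy_singleton, ← N.word_flatten_replicate_apply hx m]
  exact mem_image_of_mem _ hb

section OSC

variable {V : Set (Euc d)} (hV : ∀ k, N.f k '' V ⊆ V)
  (hVdisj : ∀ j k : Fin N.n, j ≠ k → N.f j '' V ∩ N.f k '' V = ∅)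
include hV

lemma image_word_subset (σ : List (Fin N.n)) : N.word σ '' V ⊆ V := by
  induction σ with
  | nil => simp [word]
  | cons i s ih =>
    rw [image_word_cons]
    exact (image_mono ih).trans (hV i)

include hVdisj

lemma disjoint_image_word_append_cons (π s s' : List (Fin N.n)) {i i' : Fin N.n} (hii' : i ≠ i') :
    Disjoint (N.word (π ++ i :: s) '' V) (N.word (π ++ i' :: s') '' V) := by
  rw [N.image_word_append, N.image_word_append]
  refine disjoint_image_of_injective (N.word π).injective ?_
  rw [image_word_cons, image_word_cons]
  exact disjoint_iff_inter_eq_empty.2 (hVdisj i i' hii') |>.mono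
    (image_mono (N.image_word_subset hV s)) (image_mono (N.image_word_subset hV s'))

lemma pairwiseDisjoint_image_word_flatten_replicate {t b : Fin N.n} (hbt : b ≠ t)
    (τ : List (Fin N.n)) (u : ℕ → List (Fin N.n)) :
    (univ : Set ℕ).PairwiseDisjoint
      fun m => N.word ((List.replicate m (t :: τ)).flatten ++ b :: u m) '' V := by
  have hlt {m m' : ℕ} (hmm' : m < m') :
      Disjoint (N.word ((List.replicate m (t :: τ)).flatten ++ b :: u m) '' V)
        (N.word ((List.replicate m' (t :: τ)).flatten ++ b :: u m') '' V) := by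
    obtain ⟨k, rfl⟩ := Nat.exists_eq_add_of_lt hmm'
    have : (List.replicate (m + k + 1) (t :: τ)).flatten ++ b :: u (m + k + 1) =
        (List.replicate m (t :: τ)).flatten ++
          t :: (τ ++ (List.replicate k (t :: τ)).flatten ++ b :: u (m + k + 1)) := by
      rw [Nat.add_assoc, List.replicate_add, List.replicate_succ, List.flatten_append,
        List.flatten_cons]
      simp
    rw [this]
    exact N.disjoint_image_word_append_cons hV hVdisj _ _ _ hbt
  intro m _ m' _ hne
  rcases hne.lt_or_gt with h | h
  exacts [hlt h, (hlt h).symm]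

end OSC

section Similitude

variable {c : Fin N.n → ℝ} (hc : ∀ k x y, dist (N.f k x) (N.f k y) = c k * dist x y)
include hc

lemma dist_word (σ : List (Fin N.n)) (x y : Euc d) :
    dist (N.word σ x) (N.word σ y) = (σ.map c).prod * dist x y := by
  induction σ generalizing x y with
  | nil => simp [word]
  | cons i s ih => rw [word_cons, word_cons, hc, ih, List.map_cons, List.prod_cons, mul_assoc]

theorem card_le_of_pairwiseDisjoint_image_word {ι : Type*} {s : Finset ι}
    {σ : ι → List (Fin N.n)} {v₀ x : Euc d} {ρ₀ M₀ κ ρ : ℝ} (hρ₀ : 0 < ρ₀)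
    (hM₀ : N.F ⊆ closedBall v₀ M₀) (hκ : 0 < κ) (hρ : 0 < ρ)
    (hdisj : (s : Set ι).PairwiseDisjoint fun i => N.word (σ i) '' ball v₀ ρ₀)
    (hx : ∀ i ∈ s, x ∈ N.copy (σ i))
    (hratio : ∀ i ∈ s, κ * ρ ≤ ((σ i).map c).prod ∧ ((σ i).map c).prod ≤ ρ) :
    (s.card : ℝ) ≤ ((M₀ + κ * ρ₀) / (κ * ρ₀)) ^ d := by
  have hM₀nonneg : 0 ≤ M₀ := nonempty_closedBall.1 (N.Fne.mono hM₀)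
  have hball : ∀ i ∈ s, ball (N.word (σ i) v₀) (κ * ρ * ρ₀) ⊆ N.word (σ i) '' ball v₀ ρ₀ :=
    fun i hi => (ball_subset_ball (by gcongr; exact (hratio i hi).1)).trans
      (ball_subset_image_ball_of_dist_eq (N.word (σ i)).surjective
        (by nlinarith [(hratio i hi).1]) (N.dist_word hc (σ i)) v₀ ρ₀)
  have hdist : ∀ i ∈ s, dist (N.word (σ i) v₀) x ≤ ρ * M₀ := by
    intro i hi
    obtain ⟨w, hw, rfl⟩ := hx i hi
    rw [N.dist_word hc, dist_comm]
    exact mul_le_mul (hratio i hi).2 (hM₀ hw) dist_nonneg hρ.le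
  have hcard := card_le_of_pairwiseDisjoint_ball (by positivity) (by positivity)
    (hdisj.mono_on hball) hdist
  rwa [finrank_euclideanSpace_fin, show ρ * M₀ + κ * ρ * ρ₀ = ρ * (M₀ + κ * ρ₀) by ring,
    show κ * ρ * ρ₀ = ρ * (κ * ρ₀) by ring, mul_div_mul_left _ _ hρ.ne'] at hcard

end Similitude

lemma exists_refinement_flatten_replicate {c : Fin N.n → ℝ} (hc0 : ∀ k, 0 < c k)
    (hc1 : ∀ k, c k < 1) {κ : ℝ} (hκ : 0 < κ) (hκc : ∀ k, κ ≤ c k) {τ : List (Fin N.n)}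
    {x : Euc d} (hx : N.word τ x = x) {b : Fin N.n} (hb : x ∈ N.f b '' N.F) (K : ℕ) :
    ∃ ρ > 0, ∃ u : ℕ → List (Fin N.n), ∀ m ≤ K,
      x ∈ N.copy ((List.replicate m τ).flatten ++ b :: u m) ∧
      κ * ρ ≤ (((List.replicate m τ).flatten ++ b :: u m).map c).prod ∧
      (((List.replicate m τ).flatten ++ b :: u m).map c).prod ≤ ρ := by
  have : Nonempty (Fin N.n) := ⟨b⟩
  obtain ⟨kmax, hkmax⟩ := Finite.exists_max c
  set r := (τ.map c).prod
  have hr₀ : 0 < r := List.prod_pos fun _ hr => by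
    obtain ⟨i, -, rfl⟩ := List.mem_map.1 hr
    exact hc0 i
  have hr₁ : r ≤ 1 := by
    simpa [r] using List.prod_map_le_prod_map₀ (s := τ) c (fun _ => 1) (fun i _ => (hc0 i).le)
      (fun i _ => (hc1 i).le)
  have hρ : 0 < r ^ K * κ := by positivity
  have hstart (m : ℕ) (hm : m ≤ K) :
      r ^ K * κ ≤ (((List.replicate m τ).flatten ++ [b]).map c).prod := by
    simp only [List.map_append, List.prod_append, List.map_flatten, List.prod_flatten,
      List.map_replicate, List.prod_replicate, List.map_cons, List.map_nil, List.prod_cons,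
      List.prod_nil, mul_one]
    exact mul_le_mul (pow_le_pow_of_le_one hr₀.le hr₁ hm) (hκc b) hκ.le (by positivity)
  have hrefine (m : ℕ) (hm : m ≤ K) := exists_prod_map_append_mem_Ioc
    (P := fun σ => x ∈ N.copy σ) (fun _ => N.exists_mem_copy_append_singleton) hκ
    (fun i => ⟨hκc i, hkmax i⟩) (hc1 kmax) (N.mem_copy_flatten_replicate_append hx hb m) hρ
    (hstart m hm)
  choose! u hu using hrefine
  refine ⟨r ^ K * κ, hρ, u, fun m hm => ?_⟩
  obtain ⟨hmem, hlo, hhi⟩ := hu m hm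
  simp only [List.append_assoc, List.singleton_append] at hmem hlo hhi
  exact ⟨hmem, hlo.le, hhi⟩

theorem word_apply_z_ne (hss : N.SelfSimilar) (hosc : N.OSC) (a : Fin N.n)
    {τ : List (Fin N.n)} (hτ : τ ≠ []) : N.word τ (N.z a) ≠ N.z a := by
  intro hfix
  obtain ⟨V, ⟨v₀, hv₀⟩, hVopen, -, hV, hVdisj⟩ := hosc
  obtain ⟨ρ₀, hρ₀, hball⟩ := isOpen_iff.1 hVopen v₀ hv₀
  obtain ⟨M₀, hM₀⟩ := N.Fcpt.isBounded.subset_closedBall v₀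
  choose c hc0 hc1 hc using hss
  have : Nonempty (Fin N.n) := ⟨a⟩
  obtain ⟨kmin, hkmin⟩ := Finite.exists_min c
  obtain ⟨t, τ, rfl⟩ := List.exists_cons_of_ne_nil hτ
  obtain ⟨b, hbt, hb⟩ := N.exists_ne_z_mem_image_f a t
  set C := ((M₀ + c kmin * ρ₀) / (c kmin * ρ₀)) ^ d
  obtain ⟨ρ, hρ, u, hu⟩ :=
    N.exists_refinement_flatten_replicate hc0 hc1 (hc0 kmin) hkmin hfix hb ⌈C⌉₊
  have hdisj : ((Finset.range (⌈C⌉₊ + 1) : Finset ℕ) : Set ℕ).PairwiseDisjoint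
      fun m => N.word ((List.replicate m (t :: τ)).flatten ++ b :: u m) '' ball v₀ ρ₀ :=
    ((N.pairwiseDisjoint_image_word_flatten_replicate hV hVdisj hbt τ u).subset
      (subset_univ _)).mono_on fun m _ => image_mono hball
  have hcard := N.card_le_of_pairwiseDisjoint_image_word hc hρ₀ hM₀ (hc0 kmin) hρ hdisj
    (fun m hm => (hu m (Finset.mem_range_succ_iff.1 hm)).1)
    (fun m hm => (hu m (Finset.mem_range_succ_iff.1 hm)).2)
  rw [Finset.card_range, Nat.cast_add_one] at hcard
  linarith [Nat.le_ceil C]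

end Necklace

/-- Every self-similar necklace in `ℝ^d` satisfying the open set condition is of
bounded ramification. -/
theorem Necklace.boundedRamification_of_selfSimilar_osc {d : ℕ} (N : Necklace d)
    (hss : N.SelfSimilar) (hosc : N.OSC) : N.BoundedRamification := by
  intro k
  refine ⟨N.n ^ N.n, fun m => ?_⟩
  calc N.cnt m (N.z k) ≤ N.n ^ (N.nodeIndices (N.z k)).ncard :=
        N.cnt_le_pow_ncard_nodeIndices (fun a _ hτ => N.word_apply_z_ne hss hosc a hτ) m _
    _ ≤ N.n ^ N.n := Nat.pow_le_pow_right (by have := N.hn; omega)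
        ((ncard_le_card _).trans_eq (Nat.card_fin _))
end
end

section
/- Every fractal necklace F contains a topological circle (a homeomorphic image of the unit circle S^1) passing through all main nodes z_1,…,z_n of F, provided F has Property I (each 1-level copy F_k has an arc from z_{k−1} to z_k passing through at least two main nodes of F_k). More weakly: every necklace contains a topological circle through all its main nodes, obtained by concatenating arcs γ^{(k)} ⊆ F_k from z_{k−1} to z_k. -/
open Set Topology Metric Bornology

noncomputable section

/-! The arcs `γ_k ⊆ F_k` from `z_{k-1}` to `z_k` are concatenated in order. Adjacent copies
meet only in their common main node and non-adjacent copies are disjoint, so `γ_1 ⋯ γ_m` is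
still an arc for `m < n`, and closing it up with `γ_n` gives a loop that is injective except
at its endpoints. Such a loop factors through a continuous injection of the compact circle
into a Hausdorff space, whose image is therefore homeomorphic to the circle. -/

open unitInterval

namespace Path

variable {X : Type*} [TopologicalSpace X] {x y z : X}

theorem exists_mem_range_of_trans_apply_eq {p : Path x y} {q : Path y z}
    (hp : Function.Injective p) (hq : Function.Injective q) {s t : I} (hst : s < t)
    (h : p.trans q s = p.trans q t) :
    1 / 2 < (t : ℝ) ∧ ∃ u : I, (u : ℝ) = 2 * t - 1 ∧ q u ∈ range p := by
  have hst' : (s : ℝ) < t := hst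
  rw [trans_apply, trans_apply] at h
  split_ifs at h with hs ht ht
  · have := congrArg Subtype.val (hp h)
    simp only at this
    linarith
  · exact ⟨not_le.1 ht, _, rfl, _, h⟩
  · linarith
  · have := congrArg Subtype.val (hq h)
    simp only at this
    linarith

theorem injective_trans {p : Path x y} {q : Path y z} (hp : Function.Injective p)
    (hq : Function.Injective q) (hpq : range p ∩ range q ⊆ {y}) :
    Function.Injective (p.trans q) := by
  refine .of_lt_imp_ne fun s t hst h ↦ ?_
  obtain ⟨ht, u, hu, hup⟩ := exists_mem_range_of_trans_apply_eq hp hq hst h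
  have hu0 : q u = q 0 := by rw [q.source]; exact hpq ⟨hup, mem_range_self u⟩
  have := congrArg Subtype.val (hq hu0)
  simp only [Icc.coe_zero] at this
  linarith

theorem injOn_trans {p : Path x y} {q : Path y z} (hp : Function.Injective p)
    (hq : Function.Injective q) (hpq : range p ∩ range q ⊆ {y, z}) :
    InjOn (p.trans q) {t | t ≠ 1} := by
  have key : ∀ s t : I, s < t → t ≠ 1 → p.trans q s ≠ p.trans q t := by
    intro s t hst ht1 h
    obtain ⟨ht, u, hu, hup⟩ := exists_mem_range_of_trans_apply_eq hp hq hst h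
    rcases hpq ⟨hup, mem_range_self u⟩ with hy | hz
    · have := congrArg Subtype.val (hq (hy.trans q.source.symm))
      simp only [Icc.coe_zero] at this
      linarith
    · have := congrArg Subtype.val (hq (hz.trans q.target.symm))
      simp only [Icc.coe_one] at this
      exact ht1 (Subtype.ext (by simp only [Icc.coe_one]; linarith))
  intro s hs t ht h
  rcases lt_trichotomy s t with hst | rfl | hst
  · exact absurd h (key s t hst ht)
  · rfl
  · exact absurd h.symm (key t s hst hs)

theorem nonempty_range_homeomorph_circle [T2Space X] (γ : Path x x)
    (hγ : InjOn γ {t | t ≠ 1}) : Nonempty (range γ ≃ₜ Circle) := by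
  have : Fact ((0 : ℝ) < 1) := ⟨one_pos⟩
  set h := AddCircle.liftIco 1 0 γ.extend
  have hIco : ∀ u ∈ Ico (0 : ℝ) 1, h u = γ.extend u := fun u hu ↦
    AddCircle.liftIco_zero_coe_apply hu
  have hcont : Continuous h :=
    AddCircle.liftIco_zero_continuous (by simp) γ.continuous_extend.continuousOn
  have hsurj : ∀ a : AddCircle (1 : ℝ), ∃ u ∈ Ico (0 : ℝ) 1, ↑u = a := by
    intro a
    have := AddCircle.coe_image_Ico_eq (1 : ℝ) 0 ▸ mem_univ a
    simpa using this
  have hinj : Function.Injective h := by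
    intro a b hab
    obtain ⟨u, hu, rfl⟩ := hsurj a
    obtain ⟨v, hv, rfl⟩ := hsurj b
    rw [hIco u hu, hIco v hv, extend_apply _ (Ico_subset_Icc_self hu),
      extend_apply _ (Ico_subset_Icc_self hv)] at hab
    have := hγ (fun h1 ↦ hu.2.ne (congrArg Subtype.val h1))
      (fun h1 ↦ hv.2.ne (congrArg Subtype.val h1)) hab
    rw [show u = v from congrArg Subtype.val this]
  have hrange : range h = range γ := by
    apply Subset.antisymm
    · rintro _ ⟨a, rfl⟩
      obtain ⟨u, hu, rfl⟩ := hsurj a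
      rw [hIco u hu, ← extend_range]
      exact mem_range_self u
    · rintro _ ⟨t, rfl⟩
      rcases eq_or_ne t 1 with rfl | ht
      · refine ⟨(0 : ℝ), ?_⟩
        rw [hIco 0 (by simp), extend_zero, γ.target]
      · refine ⟨(t : ℝ), ?_⟩
        have ht' : (t : ℝ) ∈ Ico 0 1 :=
          ⟨t.2.1, t.2.2.lt_of_ne fun h1 ↦ ht (Subtype.ext h1)⟩
        rw [hIco t ht', extend_extends']
  exact ⟨((hcont.isClosedEmbedding hinj).toIsEmbedding.toHomeomorph.trans
    (Homeomorph.setCongr hrange)).symm.trans (AddCircle.homeomorphCircle one_ne_zero)⟩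

end Path

namespace Necklace

variable {d : ℕ} (N : Necklace d)

theorem val_eq_of_eq_add_one {j k : Fin N.n} (h : k = j + N.one) :
    (k : ℕ) = j + 1 ∨ ((k : ℕ) = 0 ∧ (j : ℕ) + 1 = N.n) := by
  subst h
  rw [Fin.val_add]
  change ((j : ℕ) + 1) % N.n = _ ∨ ((j : ℕ) + 1) % N.n = 0 ∧ _
  by_cases hj : (j : ℕ) + 1 < N.n
  · exact Or.inl (Nat.mod_eq_of_lt hj)
  · rw [show (j : ℕ) + 1 = N.n by omega, Nat.mod_self]
    exact Or.inr ⟨rfl, rfl⟩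

theorem val_sub_one (k : Fin N.n) :
    ((k - N.one : Fin N.n) : ℕ) = if (k : ℕ) = 0 then N.n - 1 else (k : ℕ) - 1 := by
  have := N.hn
  rw [Fin.val_sub]
  change (N.n - 1 + k) % N.n = _
  split_ifs with hk
  · rw [hk, Nat.add_zero, Nat.mod_eq_of_lt (by omega)]
  · rw [show N.n - 1 + k = (k - 1) + N.n by omega, Nat.add_mod_right,
      Nat.mod_eq_of_lt (by omega)]

theorem eq_or_adjacent_of_mem_copies {j k : Fin N.n} {x : Euc d} (hj : x ∈ N.f j '' N.F)
    (hk : x ∈ N.f k '' N.F) :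
    j = k ∨ (k = j + N.one ∧ x = N.z j) ∨ (j = k + N.one ∧ x = N.z k) := by
  by_contra! h
  obtain ⟨hjk, hadj, hadj'⟩ := h
  by_cases hkj : k = j + N.one
  · exact hadj hkj ((N.hz j).subset ⟨hj, by rwa [hkj] at hk⟩)
  by_cases hjk' : j = k + N.one
  · exact hadj' hjk' ((N.hz k).subset ⟨hk, by rwa [hjk'] at hj⟩)
  exact (N.hdisj j k hjk hjk' hkj).subset ⟨hj, hk⟩

def last : Fin N.n := ⟨N.n - 1, by have := N.hn; omega⟩

section Chain

variable {N} (γ : ∀ k, Path (N.z (k - N.one)) (N.z k))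

def chain : (m : ℕ) → (hm : m < N.n) → Path (N.z N.last) (N.z ⟨m, hm⟩)
  | 0, hm => (γ ⟨0, hm⟩).cast (congrArg N.z (Fin.ext (by simp [val_sub_one, last]))) rfl
  | m + 1, hm => (chain m (by omega)).trans ((γ ⟨m + 1, hm⟩).cast
      (congrArg N.z (Fin.ext (by simp [val_sub_one]))) rfl)

theorem mem_range_chain {m : ℕ} (hm : m < N.n) {x : Euc d} :
    x ∈ range (chain γ m hm) ↔ ∃ j : Fin N.n, (j : ℕ) ≤ m ∧ x ∈ range (γ j) := by
  induction m with
  | zero =>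
    simp only [chain, Path.cast_coe, Nat.le_zero]
    refine ⟨fun h ↦ ⟨_, rfl, h⟩, fun ⟨j, hj, hx⟩ ↦ ?_⟩
    rwa [show j = ⟨0, hm⟩ from Fin.ext hj] at hx
  | succ m ih =>
    rw [chain, Path.trans_range, Path.cast_coe, mem_union, ih]
    constructor
    · rintro (⟨j, hj, hx⟩ | hx)
      · exact ⟨j, by omega, hx⟩
      · exact ⟨_, le_rfl, hx⟩
    · rintro ⟨j, hj, hx⟩
      rcases Nat.lt_or_eq_of_le hj with hj | hj
      · exact Or.inl ⟨j, by omega, hx⟩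
      · rw [show j = ⟨m + 1, hm⟩ from Fin.ext hj] at hx
        exact Or.inr hx

variable {γ}

theorem exists_adjacent_of_mem_range_chain (hF : ∀ k t, γ k t ∈ N.f k '' N.F) {m : ℕ}
    (hm : m < N.n) {k : Fin N.n} (hmk : m < k) {x : Euc d} (hx : x ∈ range (chain γ m hm))
    (hxk : x ∈ range (γ k)) :
    ∃ j : Fin N.n, (j : ℕ) ≤ m ∧
      ((k = j + N.one ∧ x = N.z j) ∨ (j = k + N.one ∧ x = N.z k)) := by
  obtain ⟨j, hjm, ⟨t, rfl⟩⟩ := (mem_range_chain γ hm).1 hx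
  obtain ⟨s, hs⟩ := hxk
  rcases N.eq_or_adjacent_of_mem_copies (hF j t) (hs ▸ hF k s) with rfl | h
  · omega
  · exact ⟨j, hjm, h⟩

theorem injective_chain (hinj : ∀ k, Function.Injective (γ k))
    (hF : ∀ k t, γ k t ∈ N.f k '' N.F) :
    ∀ (m : ℕ) (hm : m + 1 < N.n), Function.Injective (chain γ m (by omega))
  | 0, _ => by simpa only [chain, Path.cast_coe] using hinj _
  | m + 1, hm => by
    refine Path.injective_trans (injective_chain hinj hF m (by omega))
      (by simpa only [Path.cast_coe] using hinj _) ?_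
    rintro x ⟨hx, hxk⟩
    rw [Path.cast_coe] at hxk
    obtain ⟨j, hjm, ⟨hk, rfl⟩ | ⟨hj, -⟩⟩ :=
      exists_adjacent_of_mem_range_chain hF _ (by simp) hx hxk
    · have := N.val_eq_of_eq_add_one hk
      exact congrArg N.z (Fin.ext (by simp only at this ⊢; omega))
    · have := N.val_eq_of_eq_add_one hj
      simp only at this
      omega

theorem injOn_chain_of_add_two_eq (hinj : ∀ k, Function.Injective (γ k))
    (hF : ∀ k t, γ k t ∈ N.f k '' N.F) {m : ℕ} (hm : m + 2 = N.n) :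
    InjOn (chain γ (m + 1) (by omega)) {t | t ≠ 1} := by
  refine Path.injOn_trans (injective_chain hinj hF m (by omega))
    (by simpa only [Path.cast_coe] using hinj _) ?_
  rintro x ⟨hx, hxk⟩
  rw [Path.cast_coe] at hxk
  obtain ⟨j, hjm, ⟨hk, rfl⟩ | ⟨-, rfl⟩⟩ :=
    exists_adjacent_of_mem_range_chain hF _ (by simp) hx hxk
  · have := N.val_eq_of_eq_add_one hk
    exact Or.inl (congrArg N.z (Fin.ext (by simp only at this ⊢; omega)))
  · exact Or.inr rfl

theorem exists_simple_loop (hinj : ∀ k, Function.Injective (γ k))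
    (hF : ∀ k t, γ k t ∈ N.f k '' N.F) :
    ∃ loop : Path (N.z N.last) (N.z N.last),
      InjOn loop {t | t ≠ 1} ∧ range loop = ⋃ k, range (γ k) := by
  obtain ⟨m, hm⟩ : ∃ m, m + 2 = N.n := ⟨N.n - 2, by have := N.hn; omega⟩
  refine ⟨(chain γ (m + 1) (by omega)).cast rfl
    (congrArg N.z (Fin.ext (by simp only [last]; omega))), ?_, ?_⟩
  · simpa only [Path.cast_coe] using injOn_chain_of_add_two_eq hinj hF hm
  · ext x
    rw [Path.cast_coe, mem_range_chain, mem_iUnion]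
    exact ⟨fun ⟨j, _, hx⟩ ↦ ⟨j, hx⟩, fun ⟨j, hx⟩ ↦ ⟨j, by omega, hx⟩⟩

end Chain

end Necklace

/-- Every fractal necklace with Property I contains a topological circle (a homeomorphic
image of the unit circle) passing through all of its main nodes `z_1, …, z_n`. -/
theorem Necklace.exists_circle_through_main_nodes {d : ℕ} (N : Necklace d)
    (hPI : N.PropertyI) :
    ∃ γ : Set (Euc d), γ ⊆ N.F ∧ (∀ k : Fin N.n, N.z k ∈ γ) ∧
      Nonempty (γ ≃ₜ Circle) := by
  choose γ hinj hF _ using hPI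
  obtain ⟨loop, hloop, hrange⟩ := N.exists_simple_loop hinj hF
  refine ⟨range loop, ?_, fun k ↦ ?_, loop.nonempty_range_homeomorph_circle hloop⟩
  · rw [hrange, N.Fattr]
    exact iUnion_mono fun k ↦ range_subset_iff.2 (hF k)
  · rw [hrange]
    exact mem_iUnion.2 ⟨k, 1, (γ k).target⟩
end
end
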